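/- A symmetric tensor A of order m and dimension n is strictly copositive if and only if there exists γ ≥ 0 such that A x^m + γ ‖x⁻‖^m > 0 for all x ∈ ℝ^n with ‖x‖ = 1. -/
import Mathlib


open Finset

/-- `A x^m` for an `m`-order `n`-dimensional tensor `A`. -/
noncomputable def tpow {m n : ℕ} (A : (Fin m → Fin n) → ℝ) (x : Fin n → ℝ) : ℝ :=
  ∑ f : Fin m → Fin n, A f * ∏ k, x (f k)

/-- `A` is symmetric: entries invariant under permutations of indices. -/
def SymT {m n : ℕ} (A : (Fin m → Fin n) → ℝ) : Prop :=
  ∀ (σ : Equiv.Perm (Fin m)) (f : Fin m → Fin n), A (f ∘ σ) = A f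

/-- `A` is copositive. -/
def CoposT {m n : ℕ} (A : (Fin m → Fin n) → ℝ) : Prop :=
  ∀ x : Fin n → ℝ, (∀ i, 0 ≤ x i) → 0 ≤ tpow A x

/-- `A` is strictly copositive. -/
def StrictCoposT {m n : ℕ} (A : (Fin m → Fin n) → ℝ) : Prop :=
  ∀ x : Fin n → ℝ, (∀ i, 0 ≤ x i) → x ≠ 0 → 0 < tpow A x

lemma tpow_smul {m n : ℕ} (A : (Fin m → Fin n) → ℝ) (c : ℝ) (x : Fin n → ℝ) :
    tpow A (c • x) = c ^ m * tpow A x := by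
  unfold tpow
  rw [Finset.mul_sum]
  refine Finset.sum_congr rfl fun f _ => ?_
  simp only [Pi.smul_apply, smul_eq_mul]
  rw [Finset.prod_mul_distrib, Finset.prod_const, Finset.card_univ, Fintype.card_fin]
  ring

lemma tpow_continuous {m n : ℕ} (A : (Fin m → Fin n) → ℝ) : Continuous (tpow A) := by
  unfold tpow
  exact continuous_finset_sum _ fun f _ =>
    continuous_const.mul (continuous_finset_prod _ fun k _ => continuous_apply (f k))

theorem stmt5 {m n : ℕ} (hm : 0 < m) (A : (Fin m → Fin n) → ℝ) (hA : SymT A) :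
    StrictCoposT A ↔
      ∃ γ : ℝ, 0 ≤ γ ∧ ∀ x : Fin n → ℝ, ‖x‖ = 1 →
        0 < tpow A x + γ * ‖(fun i => max (-(x i)) 0 : Fin n → ℝ)‖ ^ m := by
  set g : (Fin n → ℝ) → ℝ := fun x => ‖(fun i => max (-(x i)) 0 : Fin n → ℝ)‖ ^ m with hg
  have hgc : Continuous g := by
    apply Continuous.pow
    apply Continuous.norm
    exact continuous_pi fun i => ((continuous_apply i).neg).max continuous_const
  have hg0 : ∀ x, 0 ≤ g x := fun x => pow_nonneg (norm_nonneg _) m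
  have hgpos : ∀ x : Fin n → ℝ, g x = 0 → ∀ i, 0 ≤ x i := by
    intro x hx i
    have h1 : ‖(fun i => max (-(x i)) 0 : Fin n → ℝ)‖ = 0 := by
      have := pow_eq_zero_iff hm.ne' |>.mp hx
      exact this
    have h2 : (fun i => max (-(x i)) 0 : Fin n → ℝ) = 0 := norm_eq_zero.mp h1
    have h3 : max (-(x i)) 0 = 0 := congrFun h2 i
    have : -(x i) ≤ 0 := by
      by_contra hcon
      push_neg at hcon
      rw [max_eq_left hcon.le] at h3
      linarith
    linarith
  constructor
  · intro h
    set C : Set (Fin n → ℝ) := Metric.sphere 0 1 ∩ {x | tpow A x ≤ 0} with hCdef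
    have hCcomp : IsCompact C :=
      (isCompact_sphere (0 : Fin n → ℝ) 1).inter_right
        (isClosed_le (tpow_continuous A) continuous_const)
    have hCg : ∀ x ∈ C, 0 < g x := by
      intro x hx
      rcases (hg0 x).lt_or_eq with hlt | heq
      · exact hlt
      · exfalso
        have hxpos := hgpos x heq.symm
        have hxne : x ≠ 0 := by
          intro h0
          have := mem_sphere_zero_iff_norm.mp hx.1
          rw [h0] at this; simp at this
        exact absurd (h x hxpos hxne) (not_lt.mpr hx.2)
    rcases C.eq_empty_or_nonempty with hC | hC
    · refine ⟨0, le_refl 0, fun x hx => ?_⟩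
      have hxnotC : x ∉ C := by rw [hC]; exact Set.notMem_empty x
      have : ¬ (tpow A x ≤ 0) := fun hcon =>
        hxnotC ⟨mem_sphere_zero_iff_norm.mpr hx, hcon⟩
      push_neg at this
      nlinarith [hg0 x]
    · obtain ⟨x₀, hx₀C, hx₀⟩ := hCcomp.exists_isMinOn hC hgc.continuousOn
      obtain ⟨x₁, hx₁C, hx₁⟩ := hCcomp.exists_isMinOn hC (tpow_continuous A).continuousOn
      set δ := g x₀ with hδ
      have hδpos : 0 < δ := hCg x₀ hx₀C
      set μ := tpow A x₁ with hμ
      have hμle : μ ≤ 0 := hx₁C.2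
      refine ⟨(1 - μ) / δ, div_nonneg (by linarith) hδpos.le, fun x hx => ?_⟩
      have hxS : x ∈ Metric.sphere (0 : Fin n → ℝ) 1 := mem_sphere_zero_iff_norm.mpr hx
      by_cases hxC : x ∈ C
      · have h1 : μ ≤ tpow A x := hx₁ hxC
        have h2 : δ ≤ g x := hx₀ hxC
        have hγpos : 0 < (1 - μ) / δ := div_pos (by linarith) hδpos
        have : (1 - μ) / δ * δ ≤ (1 - μ) / δ * g x := by nlinarith
        have hdd : (1 - μ) / δ * δ = 1 - μ := by field_simp
        nlinarith
      · have : ¬ (tpow A x ≤ 0) := fun hcon => hxC ⟨hxS, hcon⟩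
        push_neg at this
        nlinarith [hg0 x, div_nonneg (by linarith : (0:ℝ) ≤ 1 - μ) hδpos.le]
  · rintro ⟨γ, hγ, hγh⟩ x hxpos hxne
    have hxn : ‖x‖ ≠ 0 := norm_ne_zero_iff.mpr hxne
    have hxnpos : 0 < ‖x‖ := (norm_nonneg x).lt_of_ne' hxn
    set y := ‖x‖⁻¹ • x with hy
    have hyn : ‖y‖ = 1 := by
      rw [hy, norm_smul, norm_inv, norm_norm, inv_mul_cancel₀ hxn]
    have hneg : (fun i => max (-(y i)) 0 : Fin n → ℝ) = 0 := by
      funext i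
      have : 0 ≤ y i := by
        rw [hy]; exact mul_nonneg (inv_nonneg.mpr (norm_nonneg x)) (hxpos i)
      simp [max_eq_right (by linarith : -(y i) ≤ 0)]
    have := hγh y hyn
    rw [hneg] at this
    simp only [norm_zero, zero_pow hm.ne', mul_zero, add_zero] at this
    rw [hy, tpow_smul] at this
    nlinarith [pow_pos (inv_pos.mpr hxnpos) m, this]
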